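/- arXiv:2211.14625 — 4 statements merged into one kernel-verified Lean document; each statement's English description precedes it below -/
import Mathlib

section
/- Let s ∈ ℂ and θ ∈ ℝ with e^s ≠ e^{iθ}. Then e^s / (e^s − e^{iθ}) = 1/2 + 1/(s − iθ) + ∑_{n=1}^∞ [ 1/(s − i(θ + 2nπ)) + 1/(s − i(θ − 2nπ)) ], where the series over n ≥ 1 converges absolutely. -/
/-!
Put `w = s - iθ`, so that `e^s / (e^s - e^{iθ}) - 1/2 = 1/2 + 1/(e^w - 1)`, and the summands are
`1/(w - 2πi(n+1)) + 1/(w + 2πi(n+1))`. Since `e^w ≠ 1`, the point `x = w / (2πi)` is not an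
integer, and the claim is Euler's partial fraction expansion
`π cot(πx) = 1/x + ∑_{n ≥ 1} (1/(x - n) + 1/(x + n))` rescaled by `2πi`, using
`π cot(πx) / (2πi) = 1/2 + 1/(e^w - 1)`. Absolute convergence is automatic in `ℂ`,
where summability and absolute summability agree.
-/

open Complex

open scoped Real

theorem Complex.div_two_pi_I_mem_integerComplement {w : ℂ} (hw : exp w ≠ 1) :
    w / (2 * π * I) ∈ integerComplement := by
  rintro ⟨n, hn⟩
  refine hw (exp_eq_one_iff.mpr ⟨n, ?_⟩)
  rw [hn, div_mul_cancel₀ _ two_pi_I_ne_zero]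

theorem Complex.hasSum_cotTerm {x : ℂ} (hx : x ∈ integerComplement) :
    HasSum (cotTerm x) (π * cot (π * x) - 1 / x) :=
  (summable_cotTerm hx).hasSum_iff_tendsto_nat.mpr (tendsto_logDeriv_euler_cot_sub hx)

theorem Complex.hasSum_inv_sub_add_inv_add_two_pi_I {w : ℂ} (hw : exp w ≠ 1) :
    HasSum (fun n : ℕ => (w - 2 * π * I * (n + 1))⁻¹ + (w + 2 * π * I * (n + 1))⁻¹)
      ((exp w - 1)⁻¹ + 1 / 2 - w⁻¹) := by
  have hx := div_two_pi_I_mem_integerComplement hw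
  obtain ⟨x, rfl⟩ : ∃ x, w = 2 * π * I * x :=
    ⟨_, (mul_div_cancel₀ w two_pi_I_ne_zero).symm⟩
  rw [mul_div_cancel_left₀ _ two_pi_I_ne_zero] at hx
  have hterm : ∀ n : ℕ,
      (2 * π * I * x - 2 * π * I * (n + 1))⁻¹ + (2 * π * I * x + 2 * π * I * (n + 1))⁻¹
        = (2 * π * I)⁻¹ * cotTerm x n := by
    intro n
    rw [cotTerm, ← mul_sub, ← mul_add, mul_inv (2 * π * I : ℂ), mul_inv (2 * π * I : ℂ),
      one_div, one_div, mul_add]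
  have hval : (exp (2 * π * I * x) - 1)⁻¹ + 1 / 2 - (2 * π * I * x)⁻¹
      = (2 * π * I)⁻¹ * (π * cot (π * x) - 1 / x) := by
    have h1 : exp (2 * π * I * x) - 1 ≠ 0 := sub_ne_zero.mpr hw
    have h2 : 1 - exp (2 * π * I * x) ≠ 0 := sub_ne_zero.mpr hw.symm
    have h3 := integerComplement.ne_zero hx
    rw [cot_pi_eq_exp_ratio]
    field_simp
    linear_combination
      (π * x * (1 + exp (2 * π * I * x)) * (1 - exp (2 * π * I * x))) * I_mul_I
  rw [funext hterm, hval]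
  exact (hasSum_cotTerm hx).mul_left _

/-- For `s ∈ ℂ` and `θ ∈ ℝ` with `e^s ≠ e^{iθ}`,
`e^s/(e^s - e^{iθ}) = 1/2 + 1/(s - iθ) + ∑_{n≥1} [1/(s - i(θ + 2nπ)) + 1/(s - i(θ - 2nπ))]`,
where the series over `n ≥ 1` converges absolutely. -/
theorem logDeriv_partial_fraction (s : ℂ) (θ : ℝ)
    (h : Complex.exp s ≠ Complex.exp (Complex.I * θ)) :
    Summable (fun n : ℕ =>
      ‖(s - Complex.I * ((θ : ℂ) + 2 * ((n : ℂ) + 1) * (Real.pi : ℂ)))⁻¹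
        + (s - Complex.I * ((θ : ℂ) - 2 * ((n : ℂ) + 1) * (Real.pi : ℂ)))⁻¹‖)
    ∧ HasSum (fun n : ℕ =>
        (s - Complex.I * ((θ : ℂ) + 2 * ((n : ℂ) + 1) * (Real.pi : ℂ)))⁻¹
          + (s - Complex.I * ((θ : ℂ) - 2 * ((n : ℂ) + 1) * (Real.pi : ℂ)))⁻¹)
        (Complex.exp s / (Complex.exp s - Complex.exp (Complex.I * θ))
          - 1 / 2 - (s - Complex.I * θ)⁻¹) := by
  have hq : exp (I * θ) ≠ 0 := exp_ne_zero _
  have hw : exp (s - I * θ) ≠ 1 := by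
    rwa [exp_sub, Ne, div_eq_one_iff_eq hq]
  have hterms : ∀ n : ℕ,
      (s - I * (θ + 2 * (n + 1) * π))⁻¹ + (s - I * (θ - 2 * (n + 1) * π))⁻¹
        = (s - I * θ - 2 * π * I * (n + 1))⁻¹ + (s - I * θ + 2 * π * I * (n + 1))⁻¹ := by
    intro n
    ring_nf
  have hval : exp s / (exp s - exp (I * θ)) - 1 / 2 - (s - I * θ)⁻¹
      = (exp (s - I * θ) - 1)⁻¹ + 1 / 2 - (s - I * θ)⁻¹ := by
    have h1 : exp s - exp (I * θ) ≠ 0 := sub_ne_zero.mpr h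
    rw [exp_sub]
    field_simp
    ring
  have hsum := hasSum_inv_sub_add_inv_add_two_pi_I hw
  rw [← funext hterms, ← hval] at hsum
  exact ⟨summable_norm_iff.mpr hsum.summable, hsum⟩
end

section
/- For every integer N ≥ 2 and every N×N unitary matrix U, setting s₀ = log(1 − 1/N) (a negative real number) and z₀ = e^{s₀} = 1 − 1/N, one has 0 < ∑_{j=1}^N (−s₀)/(s₀² + θ_j²) ≤ N/2 + | z₀ · (P′_U/P_U)(z₀) |. -/
/-!
Write `z = e^s` with `s < 0` and `w = e^{iθ}` for an eigenvalue. Then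
`1/2 - Re (z/(z - w)) = (1 - z²) / (2|z - w|²)` is a Poisson kernel, and
`|z - w|² = (1 - z)² + 2z(1 - cos θ) ≤ (1 - z)² + zθ²`. With `t = -s`, the bounds
`tanh (t/2) ≤ t/2` and `t ≤ sinh t` turn this into `-s/(s² + θ²) ≤ 1/2 - Re (z/(z - w))`.
Summing over the `N` eigenvalues and bounding `-Re` by the modulus gives the inequality.
-/

open Matrix

/-- The multiset of eigenvalues of `U` (roots of its characteristic polynomial,
listed with multiplicity); each eigenvalue is `e^{iθ_j}` with `θ_j = arg` in `(-π, π]`. -/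
noncomputable def eigenvalues (N : ℕ) (U : Matrix.unitaryGroup (Fin N) ℂ) : Multiset ℂ :=
  (Matrix.charpoly (U : Matrix (Fin N) (Fin N) ℂ)).roots

open Real

lemma two_mul_exp_sub_one_le {t : ℝ} (ht : 0 ≤ t) : 2 * (exp t - 1) ≤ t * (exp t + 1) := by
  let f : ℝ → ℝ := fun x ↦ x * (exp x + 1) - 2 * (exp x - 1)
  have hf : ∀ x, HasDerivAt f (1 - (1 - x) * exp x) x := fun x ↦ by
    refine (((hasDerivAt_id x).mul ((hasDerivAt_exp x).add_const 1)).sub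
      (((hasDerivAt_exp x).sub_const 1).const_mul 2)).congr_deriv ?_
    simp only [id]
    ring
  have hf_mono : Monotone f := monotone_of_deriv_nonneg (fun x ↦ (hf x).differentiableAt)
    fun x ↦ by
      rw [(hf x).deriv, sub_nonneg]
      calc (1 - x) * exp x ≤ exp (-x) * exp x := by
            gcongr
            linarith [add_one_le_exp (-x)]
        _ = 1 := by rw [← exp_add, neg_add_cancel, exp_zero]
  simpa [f] using hf_mono ht

lemma two_mul_le_exp_sub_exp_neg {t : ℝ} (ht : 0 ≤ t) : 2 * t ≤ exp t - exp (-t) := by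
  linarith [self_le_sinh_iff.mpr ht, sinh_eq t]

lemma div_sq_add_sq_le_poisson {t : ℝ} (ht : 0 < t) (θ : ℝ) :
    t / (t ^ 2 + θ ^ 2) ≤ (1 - exp (-t) ^ 2) / (2 * (1 - 2 * exp (-t) * cos θ + exp (-t) ^ 2)) := by
  set z := exp (-t)
  have hz0 : 0 < z := exp_pos _
  have hz1 : z < 1 := exp_lt_one_iff.mpr (by linarith)
  have hzt : z * exp t = 1 := by rw [← exp_add, neg_add_cancel, exp_zero]
  have h_tanh : 2 * (1 - z) ≤ t * (1 + z) := by
    nlinarith [mul_le_mul_of_nonneg_left (two_mul_exp_sub_one_le ht.le) hz0.le]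
  have h_sinh : 2 * t * z ≤ 1 - z ^ 2 := by
    nlinarith [mul_le_mul_of_nonneg_left (two_mul_le_exp_sub_exp_neg ht.le) hz0.le]
  have h_cos : 1 - cos θ ≤ θ ^ 2 / 2 := by linarith [one_sub_sq_div_two_le_cos (x := θ)]
  have h_den : 0 < 1 - 2 * z * cos θ + z ^ 2 := by
    nlinarith [cos_le_one θ, mul_pos (sub_pos.2 hz1) (sub_pos.2 hz1)]
  rw [div_le_div_iff₀ (by positivity) (by positivity)]
  nlinarith [mul_le_mul_of_nonneg_left h_tanh (mul_nonneg ht.le (sub_pos.2 hz1).le),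
    mul_le_mul_of_nonneg_left h_cos (by positivity : (0 : ℝ) ≤ 4 * t * z),
    mul_le_mul_of_nonneg_right h_sinh (sq_nonneg θ)]

namespace Complex

lemma normSq_ofReal_sub_of_norm_eq_one (z : ℝ) {w : ℂ} (hw : ‖w‖ = 1) :
    normSq (z - w) = 1 - 2 * z * w.re + z ^ 2 := by
  have h_one := normSq_eq_norm_sq w
  rw [hw, normSq_apply] at h_one
  rw [normSq_apply]
  simp only [sub_re, ofReal_re, sub_im, ofReal_im]
  linear_combination h_one

lemma half_sub_re_mul_inv_sub (z : ℝ) {w : ℂ} (hw : ‖w‖ = 1) (hzw : (z : ℂ) ≠ w) :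
    1 / 2 - (z * (z - w)⁻¹).re = (1 - z ^ 2) / (2 * normSq (z - w)) := by
  have h_pos : 0 < normSq (z - w) := normSq_pos.mpr (sub_ne_zero.mpr hzw)
  rw [re_ofReal_mul, inv_re]
  field_simp
  simp only [sub_re, ofReal_re, normSq_ofReal_sub_of_norm_eq_one z hw]
  ring

lemma neg_log_div_le_half_sub_re {z : ℝ} (hz0 : 0 < z) (hz1 : z < 1) {w : ℂ} (hw : ‖w‖ = 1) :
    -Real.log z / (Real.log z ^ 2 + arg w ^ 2) ≤ 1 / 2 - (z * (z - w)⁻¹).re := by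
  have hzw : (z : ℂ) ≠ w := fun h ↦ by
    rw [← h, norm_real, Real.norm_of_nonneg hz0.le] at hw
    exact hz1.ne hw
  have h_re : w.re = Real.cos (arg w) := by
    rw [cos_arg (norm_ne_zero_iff.mp (by rw [hw]; exact one_ne_zero)), hw, div_one]
  have h := div_sq_add_sq_le_poisson (neg_pos.mpr (Real.log_neg hz0 hz1)) (arg w)
  rwa [neg_neg, Real.exp_log hz0, neg_sq, ← h_re, ← normSq_ofReal_sub_of_norm_eq_one z hw,
    ← half_sub_re_mul_inv_sub z hw hzw] at h

end Complex

namespace Multiset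

open Complex

variable {m : Multiset ℂ} {z : ℝ}

lemma sum_map_neg_log_div_pos (hm : m ≠ 0) (hz0 : 0 < z) (hz1 : z < 1) :
    0 < (m.map fun w ↦ -Real.log z / (Real.log z ^ 2 + arg w ^ 2)).sum := by
  have h_log := Real.log_neg hz0 hz1
  have h_log_ne := h_log.ne
  simpa using sum_lt_sum_of_nonempty (f := fun _ ↦ (0 : ℝ)) hm fun w _ ↦
    div_pos (neg_pos.mpr h_log) (by positivity)

lemma sum_map_neg_log_div_le (hm : ∀ w ∈ m, ‖w‖ = 1) (hz0 : 0 < z) (hz1 : z < 1) :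
    (m.map fun w ↦ -Real.log z / (Real.log z ^ 2 + arg w ^ 2)).sum ≤
      card m / 2 + ‖(z : ℂ) * (m.map fun w ↦ ((z : ℂ) - w)⁻¹).sum‖ := by
  have h_re : (m.map fun w ↦ 1 / 2 - ((z : ℂ) * ((z : ℂ) - w)⁻¹).re).sum =
      card m / 2 - ((z : ℂ) * (m.map fun w ↦ ((z : ℂ) - w)⁻¹).sum).re := by
    rw [sum_map_sub, ← sum_map_mul_left, map_const', sum_replicate, nsmul_eq_mul,
      ← coe_reAddGroupHom, map_multiset_sum, map_map]
    simp [div_eq_mul_inv]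
  calc _ ≤ (m.map fun w ↦ 1 / 2 - ((z : ℂ) * ((z : ℂ) - w)⁻¹).re).sum :=
        sum_map_le_sum_map _ _ fun w hw ↦ neg_log_div_le_half_sub_re hz0 hz1 (hm w hw)
    _ ≤ _ := by
        rw [h_re]
        linarith [neg_abs_le ((z : ℂ) * (m.map fun w ↦ ((z : ℂ) - w)⁻¹).sum).re,
          abs_re_le_norm ((z : ℂ) * (m.map fun w ↦ ((z : ℂ) - w)⁻¹).sum)]

end Multiset

open scoped Matrix.Norms.L2Operator in
lemma norm_eq_one_of_mem_eigenvalues {N : ℕ} {U : Matrix.unitaryGroup (Fin N) ℂ} {w : ℂ}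
    (hw : w ∈ eigenvalues N U) : ‖w‖ = 1 :=
  spectrum.norm_eq_one_of_unitary U.2
    (Matrix.mem_spectrum_iff_isRoot_charpoly.mpr (Polynomial.isRoot_of_mem_roots hw))

lemma card_eigenvalues (N : ℕ) (U : Matrix.unitaryGroup (Fin N) ℂ) :
    Multiset.card (eigenvalues N U) = N := by
  rw [eigenvalues, IsAlgClosed.card_roots_eq_natDegree, charpoly_natDegree_eq_dim, Fintype.card_fin]

/-- For every `N ≥ 2` and every unitary `U`, with `s₀ = log(1 - 1/N)` and
`z₀ = 1 - 1/N`, one has `0 < ∑_{j=1}^N (-s₀)/(s₀² + θ_j²) ≤ N/2 + |z₀ (P'_U/P_U)(z₀)|`,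
where `(P'_U/P_U)(z₀) = ∑_j 1/(z₀ - e^{iθ_j})` and `θ_j = arg(e^{iθ_j}) ∈ (-π, π]`. -/
theorem weighted_sum_bound (N : ℕ) (hN : 2 ≤ N) (U : Matrix.unitaryGroup (Fin N) ℂ) :
    0 < (((eigenvalues N U).map
          (fun lam => (-(Real.log (1 - 1 / N))) /
            ((Real.log (1 - 1 / N)) ^ 2 + (Complex.arg lam) ^ 2))).sum)
    ∧ (((eigenvalues N U).map
          (fun lam => (-(Real.log (1 - 1 / N))) /
            ((Real.log (1 - 1 / N)) ^ 2 + (Complex.arg lam) ^ 2))).sum)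
        ≤ N / 2 + ‖(((1 - 1 / N : ℝ)) : ℂ) *
            ((eigenvalues N U).map (fun lam => (((1 - 1 / N : ℝ) : ℂ) - lam)⁻¹)).sum‖ := by
  have hN' : (2 : ℝ) ≤ N := by exact_mod_cast hN
  have hz0 : 0 < 1 - 1 / (N : ℝ) := by
    rw [sub_pos, div_lt_one (by positivity)]; linarith
  have hz1 : 1 - 1 / (N : ℝ) < 1 := by
    rw [sub_lt_self_iff]; positivity
  have h_ne : eigenvalues N U ≠ 0 := by
    rw [← Multiset.card_pos, card_eigenvalues]; omega
  refine ⟨Multiset.sum_map_neg_log_div_pos h_ne hz0 hz1, ?_⟩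
  simpa only [card_eigenvalues] using
    Multiset.sum_map_neg_log_div_le (fun w hw ↦ norm_eq_one_of_mem_eigenvalues hw) hz0 hz1
end

section
/- There exists an absolute constant C > 0 such that for all u, v ∈ ℝ, every positive integer N, and every real L with 1 ≤ L ≤ N/2, with F = u·g + v·h as above, one has ∑_{k ∈ ℤ, |k| > N/2} |k| |F̂(k)|² ≤ C · (u² + v²) · L · e^{−L}. In particular, if L = L_N satisfies L_N → ∞ and L_N/N → 0 as N → ∞, then ∑_{|k| > N/2} |k| |F̂(k)|² → 0. -/
open Filter
open scoped Classical

/-- The function `f(θ) = (L/N) · 1/((1 - L/N) - e^{iθ})`. -/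
noncomputable def fFun (N : ℕ) (L : ℝ) (θ : ℝ) : ℂ :=
  ((L / N : ℝ) : ℂ) * (((1 - L / N : ℝ) : ℂ) - Complex.exp (Complex.I * θ))⁻¹

/-- The real-valued function `F = u·g + v·h`, where `g = Re f` and `h = Im f`. -/
noncomputable def FFun (N : ℕ) (L u v : ℝ) (θ : ℝ) : ℝ :=
  u * (fFun N L θ).re + v * (fFun N L θ).im

/-- The `k`-th Fourier coefficient `(1/2π) ∫₀^{2π} F(θ) e^{-ikθ} dθ` of `F`. -/
noncomputable def Fhat (N : ℕ) (L u v : ℝ) (k : ℤ) : ℂ :=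
  (1 / (2 * Real.pi) : ℂ) *
    ∫ θ in (0 : ℝ)..(2 * Real.pi), (FFun N L u v θ : ℂ) * Complex.exp (-(Complex.I * k * θ))

/-- The tail sum `∑_{k ∈ ℤ, |k| > N/2} |k| |F̂(k)|²`. -/
noncomputable def tailSum (N : ℕ) (L u v : ℝ) : ℝ :=
  ∑' k : ℤ, if (N : ℝ) / 2 < |(k : ℝ)| then |(k : ℝ)| * ‖Fhat N L u v k‖ ^ 2 else 0

/-! With `a = 1 - L/N ∈ [0, 1)`, the geometric series `(a - e^{iθ})⁻¹ = -∑ₙ aⁿ e^{-i(n+1)θ}`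
converges absolutely, so `f` has Fourier coefficients `-(L/N) a^{-k-1}` at `k < 0` and none at
`k ≥ 0`; since `F = Re((u - iv) f)`, this gives `|F̂(k)|² = (L/2N)² a^{2(|k|-1)} (u² + v²)` for
`k ≠ 0`. The tail is then an explicit arithmetico-geometric sum, and `1 - a² ≥ L/N` together with
`a^N ≤ e^{-L}` bounds it by `(u² + v²)(L + 1) e^{-L} ≤ 2 (u² + v²) L e^{-L}`. -/

open Complex ComplexConjugate MeasureTheory
open scoped Real

theorem integral_exp_int_mul_I (m : ℤ) :
    ∫ θ in (0 : ℝ)..2 * π, exp (I * m * θ) = if m = 0 then (2 * π : ℂ) else 0 := by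
  split_ifs with hm
  · simp [hm]
  · have hc : I * m ≠ 0 := mul_ne_zero I_ne_zero (Int.cast_ne_zero.mpr hm)
    have hperiod : I * m * ((2 * π : ℝ) : ℂ) = m * (2 * π * I) := by push_cast; ring
    rw [integral_exp_mul_complex hc, hperiod, exp_int_mul_two_pi_mul_I]
    simp

theorem integral_mul_exp_neg_eq_of_hasSum {b : ℤ → ℂ} (hb : Summable fun n ↦ ‖b n‖) {g : ℝ → ℂ}
    (hg : ∀ θ : ℝ, HasSum (fun n : ℤ ↦ b n * exp (I * n * θ)) (g θ)) (k : ℤ) :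
    ∫ θ in (0 : ℝ)..2 * π, g θ * exp (-(I * k * θ)) = 2 * π * b k := by
  have hterm : ∀ (n : ℤ) (θ : ℝ),
      b n * exp (I * n * θ) * exp (-(I * k * θ)) = b n * exp (I * (n - k : ℤ) * θ) := by
    intro n θ
    rw [mul_assoc, ← Complex.exp_add]
    push_cast
    ring_nf
  have hsum := intervalIntegral.hasSum_integral_of_dominated_convergence (μ := volume)
    (a := 0) (b := 2 * π) (F := fun (n : ℤ) θ ↦ b n * exp (I * n * θ) * exp (-(I * k * θ)))
    (fun n _ ↦ ‖b n‖) (fun n ↦ (by fun_prop : Continuous _).aestronglyMeasurable)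
    (fun n ↦ ae_of_all _ fun θ _ ↦ by simp [norm_exp])
    (ae_of_all _ fun _ _ ↦ hb) intervalIntegrable_const
    (ae_of_all _ fun θ _ ↦ (hg θ).mul_right _)
  simp only [hterm, intervalIntegral.integral_const_mul, integral_exp_int_mul_I, sub_eq_zero,
    mul_ite, mul_zero] at hsum
  have hδ : (fun n ↦ if n = k then b n * (2 * π) else 0) =
      fun n ↦ if n = k then b k * (2 * π : ℂ) else 0 := by
    ext n
    split_ifs with h <;> simp [h]
  rw [hδ] at hsum
  exact (hsum.unique (hasSum_ite_eq k _)).trans (mul_comm _ _)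

theorem hasSum_inv_sub_of_norm_lt {K : Type*} [NormedField K] [CompleteSpace K] {a z : K}
    (h : ‖a‖ < ‖z‖) : HasSum (fun n : ℕ ↦ -(a ^ n * z⁻¹ ^ (n + 1))) (a - z)⁻¹ := by
  have hz : z ≠ 0 := norm_pos_iff.mp ((norm_nonneg a).trans_lt h)
  have hza : z - a ≠ 0 := sub_ne_zero.mpr fun h' ↦ by rw [h'] at h; exact lt_irrefl _ h
  have hw : ‖a * z⁻¹‖ < 1 := by
    rwa [norm_mul, norm_inv, mul_inv_lt_iff₀ (norm_pos_iff.mpr hz), one_mul]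
  have hsum : -z⁻¹ * (1 - a * z⁻¹)⁻¹ = (a - z)⁻¹ := by
    rw [← neg_sub z a, inv_neg]
    field_simp
  rw [← hsum]
  exact ((hasSum_geometric_of_norm_lt_one hw).mul_left (-z⁻¹)).congr_fun fun n ↦ by ring

theorem HasSum.comp_natAbs {M : Type*} [AddCommGroup M] [TopologicalSpace M]
    [IsTopologicalAddGroup M] {f : ℕ → M} {s : M} (hf : HasSum f s) (h0 : f 0 = 0) :
    HasSum (fun k : ℤ ↦ f k.natAbs) (2 • s) := by
  simpa [h0, two_nsmul] using
    HasSum.of_nat_of_neg (f := fun k : ℤ ↦ f k.natAbs) (by simpa using hf) (by simpa using hf)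

theorem hasSum_ite_le_coe_mul_pow_sub_one {q : ℝ} (hq : |q| < 1) {m : ℕ} (hm : 1 ≤ m) :
    HasSum (fun n : ℕ ↦ if m ≤ n then n * q ^ (n - 1) else 0)
      (q ^ (m - 1) * (m / (1 - q) + q / (1 - q) ^ 2)) := by
  have hgeom := hasSum_geometric_of_abs_lt_one hq
  have hcoe := hasSum_coe_mul_geometric_of_norm_lt_one (by rwa [Real.norm_eq_abs])
  rw [← hasSum_nat_add_iff' m, Finset.sum_eq_zero fun n hn ↦ if_neg (by simpa using hn), sub_zero,
    div_eq_mul_inv (m : ℝ)]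
  refine (((hgeom.mul_left (m : ℝ)).add hcoe).mul_left (q ^ (m - 1))).congr_fun fun j ↦ ?_
  rw [if_pos (by omega), show j + m - 1 = (m - 1) + j by omega, pow_add]
  push_cast
  ring

theorem one_sub_div_sq_pow_half_le {N : ℕ} {t : ℝ} (ht0 : 0 ≤ t) (htN : t ≤ N / 2) :
    ((1 - t / N) ^ 2) ^ (N / 2) ≤ 2 * Real.exp (-t) := by
  have hr : t / N ≤ 1 / 2 := by
    rcases N.eq_zero_or_pos with rfl | hN
    · simp
    · rw [div_le_iff₀ (by positivity)]
      linarith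
  have ha0 : 1 / 2 ≤ 1 - t / N := by linarith
  have ha1 : 1 - t / N ≤ 1 := by linarith [div_nonneg ht0 (Nat.cast_nonneg N)]
  calc ((1 - t / N) ^ 2) ^ (N / 2) = (1 - t / N) ^ (2 * (N / 2)) := by rw [pow_mul]
    _ ≤ (1 - t / N) ^ (N - 1) := pow_le_pow_of_le_one (by linarith) ha1 (by omega)
    _ ≤ 2 * (1 - t / N) ^ N := by
        rcases N.eq_zero_or_pos with rfl | hN
        · norm_num
        · rw [← pow_sub_one_mul hN.ne']
          nlinarith [pow_nonneg (show (0 : ℝ) ≤ 1 - t / N by linarith) (N - 1)]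
    _ ≤ 2 * Real.exp (-t) := by
        gcongr
        exact Real.one_sub_div_pow_le_exp_neg (by linarith)

theorem ofReal_mul_re_add_mul_im (u v : ℝ) (z : ℂ) :
    ((u * z.re + v * z.im : ℝ) : ℂ) = (u - v * I) * z / 2 + conj ((u - v * I) * z / 2) := by
  rw [add_conj]
  norm_cast
  simp only [div_ofNat_re, mul_re, mul_im, sub_re, sub_im, ofReal_re, ofReal_im, I_re, I_im,
    mul_zero, mul_one, sub_self, sub_zero, add_zero, zero_sub, neg_mul, sub_neg_eq_add]
  ring

noncomputable def FCoeff (N : ℕ) (L u v : ℝ) (k : ℤ) : ℂ :=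
  ((-(L / N) / 2 * (1 - L / N) ^ (k.natAbs - 1) : ℝ) : ℂ) *
    if 0 < k then u + v * I else if k < 0 then u - v * I else 0

theorem FCoeff_zero (N : ℕ) (L u v : ℝ) : FCoeff N L u v 0 = 0 := by
  simp [FCoeff]

theorem FCoeff_neg (N : ℕ) (L u v : ℝ) (k : ℤ) :
    FCoeff N L u v (-k) = conj (FCoeff N L u v k) := by
  simp only [FCoeff, Int.natAbs_neg, map_mul, conj_ofReal, neg_pos, neg_lt_zero]
  congr 1
  split_ifs <;> first | omega | simp [sub_eq_add_neg]

theorem norm_FCoeff (N : ℕ) (L u v : ℝ) {k : ℤ} (hk : k ≠ 0) :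
    ‖FCoeff N L u v k‖ = |L / N| / 2 * |1 - L / N| ^ (k.natAbs - 1) * √(u ^ 2 + v ^ 2) := by
  have hc : ‖(u - v * I : ℂ)‖ = √(u ^ 2 + v ^ 2) := by
    rw [← norm_conj, map_sub, conj_ofReal, map_mul, conj_ofReal, conj_I, mul_neg, sub_neg_eq_add,
      norm_add_mul_I]
  rw [FCoeff, norm_mul, Complex.norm_real, Real.norm_eq_abs, abs_mul, abs_div, abs_neg, abs_two,
    abs_pow]
  congr 1
  rcases hk.lt_or_gt with hk | hk
  · rw [if_neg hk.not_gt, if_pos hk, hc]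
  · rw [if_pos hk, norm_add_mul_I]

theorem summable_norm_FCoeff {N : ℕ} {L : ℝ} (ha : |1 - L / N| < 1) (u v : ℝ) :
    Summable fun k ↦ ‖FCoeff N L u v k‖ := by
  have hgeom : Summable fun n : ℕ ↦ |L / N| / 2 * |1 - L / N| ^ n * √(u ^ 2 + v ^ 2) :=
    ((summable_geometric_of_lt_one (abs_nonneg _) ha).mul_left _).mul_right _
  apply Summable.of_add_one_of_neg_add_one
  · refine hgeom.congr fun n ↦ ?_
    rw [norm_FCoeff N L u v (by omega), show ((n : ℤ) + 1).natAbs - 1 = n by omega]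
  · refine hgeom.congr fun n ↦ ?_
    rw [norm_FCoeff N L u v (by omega), show (-((n : ℤ) + 1)).natAbs - 1 = n by omega]

theorem hasSum_FCoeff_mul_exp {N : ℕ} {L : ℝ} (ha : |1 - L / N| < 1) (u v θ : ℝ) :
    HasSum (fun k : ℤ ↦ FCoeff N L u v k * exp (I * k * θ)) (FFun N L u v θ) := by
  set w := (u - v * I) * fFun N L θ / 2
  have hneg :
      HasSum (fun n : ℕ ↦ FCoeff N L u v (-(n + 1)) * exp (I * ↑(-(n + 1 : ℤ)) * θ)) w := by
    have hz : ‖((1 - L / N : ℝ) : ℂ)‖ < ‖exp (I * θ)‖ := by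
      rwa [norm_real, norm_exp_I_mul_ofReal]
    have hw : w = (u - v * I) * (L / N : ℝ) / 2 * (((1 - L / N : ℝ) : ℂ) - exp (I * θ))⁻¹ := by
      simp only [w, fFun]
      ring
    rw [hw]
    refine ((hasSum_inv_sub_of_norm_lt hz).mul_left _).congr_fun fun n ↦ ?_
    have hexp : (exp (I * θ))⁻¹ ^ (n + 1) = exp (I * ↑(-(n + 1 : ℤ)) * θ) := by
      rw [← Complex.exp_neg, ← Complex.exp_nat_mul]
      push_cast
      ring_nf
    have hcoeff : FCoeff N L u v (-(n + 1)) =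
        ((-(L / N) / 2 * (1 - L / N) ^ n : ℝ) : ℂ) * (u - v * I) := by
      rw [FCoeff, if_neg (by omega), if_pos (by omega),
        show (-((n : ℤ) + 1)).natAbs - 1 = n by omega]
    rw [inv_pow, ← hexp, hcoeff]
    push_cast
    ring
  have hpos :
      HasSum (fun n : ℕ ↦ FCoeff N L u v (n + 1) * exp (I * ↑(n + 1 : ℤ) * θ)) (conj w) := by
    refine (hasSum_conj'.mpr hneg).congr_fun fun n ↦ ?_
    rw [map_mul, ← FCoeff_neg, neg_neg, ← exp_conj]
    congr 2
    simp only [map_mul, conj_I, conj_ofReal, Int.cast_neg, Int.cast_add, Int.cast_natCast,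
      Int.cast_one, map_neg, map_add, map_natCast, map_one]
    ring
  have hsum := HasSum.of_add_one_of_neg_add_one
    (f := fun k : ℤ ↦ FCoeff N L u v k * exp (I * k * θ)) hpos hneg
  rw [FCoeff_zero, zero_mul, add_zero, add_comm] at hsum
  rwa [FFun, ofReal_mul_re_add_mul_im]

theorem Fhat_eq_FCoeff {N : ℕ} {L : ℝ} (ha : |1 - L / N| < 1) (u v : ℝ) (k : ℤ) :
    Fhat N L u v k = FCoeff N L u v k := by
  rw [Fhat, integral_mul_exp_neg_eq_of_hasSum (summable_norm_FCoeff ha u v)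
    (hasSum_FCoeff_mul_exp ha u v), ← mul_assoc, one_div_mul_cancel (by simp [Real.pi_ne_zero]),
    one_mul]

theorem sq_norm_Fhat {N : ℕ} {L : ℝ} (ha : |1 - L / N| < 1) (u v : ℝ) {k : ℤ} (hk : k ≠ 0) :
    ‖Fhat N L u v k‖ ^ 2 =
      (L / N) ^ 2 / 4 * ((1 - L / N) ^ 2) ^ (k.natAbs - 1) * (u ^ 2 + v ^ 2) := by
  rw [Fhat_eq_FCoeff ha, norm_FCoeff N L u v hk, mul_pow, mul_pow, div_pow, sq_abs, ← pow_mul,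
    mul_comm _ 2, pow_mul, sq_abs, Real.sq_sqrt (by positivity)]
  ring

theorem hasSum_tail_Fhat {N : ℕ} {L : ℝ} (ha : |1 - L / N| < 1) (u v : ℝ) :
    HasSum (fun k : ℤ ↦ if (N : ℝ) / 2 < |(k : ℝ)| then |(k : ℝ)| * ‖Fhat N L u v k‖ ^ 2 else 0)
      ((u ^ 2 + v ^ 2) * ((L / N) ^ 2 / 2 * ((1 - L / N) ^ 2) ^ (N / 2) *
        ((N / 2 + 1 : ℕ) / (1 - (1 - L / N) ^ 2) +
          (1 - L / N) ^ 2 / (1 - (1 - L / N) ^ 2) ^ 2))) := by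
  have hq : |(1 - L / N) ^ 2| < 1 := by
    rw [abs_pow]
    exact pow_lt_one₀ (abs_nonneg _) ha two_ne_zero
  have hT := ((hasSum_ite_le_coe_mul_pow_sub_one hq (m := N / 2 + 1) (by omega)).comp_natAbs
    (by simp)).mul_left ((L / N) ^ 2 / 4 * (u ^ 2 + v ^ 2))
  rw [Nat.add_sub_cancel, nsmul_eq_mul] at hT
  have hterm : ∀ k : ℤ, (if (N : ℝ) / 2 < |(k : ℝ)| then |(k : ℝ)| * ‖Fhat N L u v k‖ ^ 2 else 0) =
      (L / N) ^ 2 / 4 * (u ^ 2 + v ^ 2) *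
        if N / 2 + 1 ≤ k.natAbs then k.natAbs * ((1 - L / N) ^ 2) ^ (k.natAbs - 1) else 0 := by
    intro k
    have hcond : (N : ℝ) / 2 < k.natAbs ↔ N / 2 + 1 ≤ k.natAbs := by
      rw [div_lt_iff₀ two_pos]
      norm_cast
      omega
    rw [← Int.cast_abs, ← Nat.cast_natAbs]
    by_cases h : N / 2 + 1 ≤ k.natAbs
    · rw [if_pos (hcond.mpr h), if_pos h, sq_norm_Fhat ha u v (by omega)]
      ring
    · rw [if_neg (mt hcond.mp h), if_neg h, mul_zero]
  convert hT.congr_fun hterm using 1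
  · rfl
  · push_cast
    ring

theorem tail_closed_form_le {N : ℕ} {L : ℝ} (hL1 : 1 ≤ L) (hLN : L ≤ N / 2) :
    (L / N) ^ 2 / 2 * ((1 - L / N) ^ 2) ^ (N / 2) *
        ((N / 2 + 1 : ℕ) / (1 - (1 - L / N) ^ 2) + (1 - L / N) ^ 2 / (1 - (1 - L / N) ^ 2) ^ 2)
      ≤ 2 * L * Real.exp (-L) := by
  have hN : (2 : ℝ) ≤ N := by linarith
  have hr0 : 0 < L / N := by positivity
  have hr : L / N ≤ 1 / 2 := by rw [div_le_iff₀ (by positivity)]; linarith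
  have hrN : L / N * N = L := div_mul_cancel₀ _ (by positivity)
  have hm : ((N / 2 + 1 : ℕ) : ℝ) ≤ N := by
    have : 2 ≤ N := by exact_mod_cast hN
    exact_mod_cast (by omega : N / 2 + 1 ≤ N)
  set r := L / N
  set q := (1 - r) ^ 2
  have h1q : r ≤ 1 - q := by nlinarith
  have hX : r ^ 2 / 2 * ((N / 2 + 1 : ℕ) / (1 - q) + q / (1 - q) ^ 2) ≤ (L + 1) / 2 := by
    have h1 : ((N / 2 + 1 : ℕ) : ℝ) / (1 - q) ≤ N / r := div_le_div₀ (by positivity) hm hr0 h1q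
    have h2 : q / (1 - q) ^ 2 ≤ 1 / r ^ 2 :=
      div_le_div₀ zero_le_one (by nlinarith) (by positivity) (pow_le_pow_left₀ hr0.le h1q 2)
    calc r ^ 2 / 2 * ((N / 2 + 1 : ℕ) / (1 - q) + q / (1 - q) ^ 2)
        ≤ r ^ 2 / 2 * (N / r + 1 / r ^ 2) := by gcongr
      _ = (r * N + 1) / 2 := by field_simp
      _ = (L + 1) / 2 := by rw [hrN]
  have hqpow : q ^ (N / 2) ≤ 2 * Real.exp (-L) := one_sub_div_sq_pow_half_le (by linarith) hLN
  calc r ^ 2 / 2 * q ^ (N / 2) * ((N / 2 + 1 : ℕ) / (1 - q) + q / (1 - q) ^ 2)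
      = q ^ (N / 2) * (r ^ 2 / 2 * ((N / 2 + 1 : ℕ) / (1 - q) + q / (1 - q) ^ 2)) := by ring
    _ ≤ 2 * Real.exp (-L) * ((L + 1) / 2) :=
        mul_le_mul hqpow hX (mul_nonneg (by positivity) (add_nonneg
          (div_nonneg (by positivity) (hr0.trans_le h1q).le) (by positivity))) (by positivity)
    _ ≤ 2 * L * Real.exp (-L) := by nlinarith [Real.exp_pos (-L)]

theorem summable_tail_and_tailSum_le {N : ℕ} {L : ℝ} (hL1 : 1 ≤ L) (hLN : L ≤ N / 2) (u v : ℝ) :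
    Summable (fun k : ℤ ↦
        if (N : ℝ) / 2 < |(k : ℝ)| then |(k : ℝ)| * ‖Fhat N L u v k‖ ^ 2 else 0) ∧
      tailSum N L u v ≤ 2 * (u ^ 2 + v ^ 2) * L * Real.exp (-L) := by
  have hr0 : 0 < L / N := div_pos (by linarith) (by linarith)
  have hr : L / N ≤ 1 / 2 := by rw [div_le_iff₀ (by linarith)]; linarith
  have hsum := hasSum_tail_Fhat (abs_lt.mpr ⟨by linarith, by linarith⟩ : |1 - L / N| < 1) u v
  refine ⟨hsum.summable, ?_⟩
  rw [tailSum, hsum.tsum_eq]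
  calc _ ≤ (u ^ 2 + v ^ 2) * (2 * L * Real.exp (-L)) :=
        mul_le_mul_of_nonneg_left (tail_closed_form_le hL1 hLN) (by positivity)
    _ = 2 * (u ^ 2 + v ^ 2) * L * Real.exp (-L) := by ring

/-- There is an absolute `C > 0` such that for all `u, v`, all `N ≥ 1` and all
`1 ≤ L ≤ N/2`, `∑_{|k| > N/2} |k| |F̂(k)|² ≤ C (u² + v²) L e^{-L}` (the sum converging);
in particular, if `L_N → ∞` and `L_N/N → 0`, the tail sum tends to `0`. -/
theorem tail_variance_sum_bound :
    (∃ C : ℝ, 0 < C ∧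
      ∀ (u v : ℝ) (N : ℕ), 0 < N → ∀ L : ℝ, 1 ≤ L → L ≤ N / 2 →
        Summable (fun k : ℤ =>
          if (N : ℝ) / 2 < |(k : ℝ)| then |(k : ℝ)| * ‖Fhat N L u v k‖ ^ 2 else 0)
        ∧ tailSum N L u v ≤ C * (u ^ 2 + v ^ 2) * L * Real.exp (-L))
    ∧ ∀ (u v : ℝ) (L : ℕ → ℝ),
        (∀ N : ℕ, 0 < N → 1 ≤ L N ∧ L N ≤ N / 2) →
        Tendsto L atTop atTop →
        Tendsto (fun N : ℕ => L N / N) atTop (nhds 0) →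
        Tendsto (fun N : ℕ => tailSum N (L N) u v) atTop (nhds 0) := by
  refine ⟨⟨2, two_pos, fun u v N _ L hL1 hLN ↦ summable_tail_and_tailSum_le hL1 hLN u v⟩,
    fun u v L hL hLtop _ ↦ ?_⟩
  have hlim : Tendsto (fun N ↦ 2 * (u ^ 2 + v ^ 2) * L N * Real.exp (-L N)) atTop (nhds 0) := by
    have := ((Real.tendsto_pow_mul_exp_neg_atTop_nhds_zero 1).comp hLtop).const_mul
      (2 * (u ^ 2 + v ^ 2))
    simp only [Function.comp_def, pow_one, mul_zero] at this
    simpa only [mul_assoc] using this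
  refine squeeze_zero' (Eventually.of_forall fun N ↦ tsum_nonneg fun k ↦ ?_) ?_ hlim
  · split_ifs <;> positivity
  · filter_upwards [eventually_gt_atTop 0] with N hN
    exact (summable_tail_and_tailSum_le (hL N hN).1 (hL N hN).2 u v).2
end

section
/- There exists an absolute constant C > 0 such that for every integer N ≥ 2 and every real θ with −π < θ ≤ π, one has |(1 − 1/N) − e^{iθ}| ≥ C · |log(1 − 1/N) − iθ|. -/
/-!
Both distances split into a radial and an angular part:
`‖r - e^{iθ}‖² = (1 - r)² + 2r(1 - cos θ)` and `‖log r - iθ‖² = (log r)² + θ²`.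
For `1/2 ≤ r ≤ 1` the radial parts compare through `|log r| ≤ r⁻¹ - 1 ≤ 2(1 - r)`, and the
angular parts through Jordan's inequality `1 - cos θ ≥ 2θ²/π²` on `|θ| ≤ π`; so `C = 1/3` works.
-/

open Complex

lemma Real.sq_log_le_four_mul_sq_one_sub {r : ℝ} (hr : 1 / 2 ≤ r) (hr₁ : r ≤ 1) :
    Real.log r ^ 2 ≤ 4 * (1 - r) ^ 2 := by
  have hr₀ : 0 < r := by linarith
  have hlog_le : 1 - r⁻¹ ≤ Real.log r := Real.one_sub_inv_le_log_of_pos hr₀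
  have hlog_nonpos : Real.log r ≤ 0 := Real.log_nonpos hr₀.le hr₁
  have hinv : r⁻¹ - 1 ≤ 2 * (1 - r) := by
    rw [inv_eq_one_div, div_sub_one hr₀.ne', div_le_iff₀ hr₀]
    nlinarith
  nlinarith

lemma Complex.norm_ofReal_sub_exp_mul_I_sq (r θ : ℝ) :
    ‖(r : ℂ) - exp (I * θ)‖ ^ 2 = (1 - r) ^ 2 + 2 * r * (1 - Real.cos θ) := by
  rw [mul_comm, exp_mul_I, Complex.sq_norm, normSq_apply]
  simp only [sub_re, ofReal_re, add_re, ← ofReal_cos, ← ofReal_sin, mul_re, I_re, I_im,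
    ofReal_im, sub_im, add_im, mul_im]
  linear_combination Real.sin_sq_add_cos_sq θ

lemma Complex.norm_ofReal_sub_I_mul_sq (a θ : ℝ) : ‖(a : ℂ) - I * θ‖ ^ 2 = a ^ 2 + θ ^ 2 := by
  rw [sub_eq_add_neg, mul_comm, ← neg_mul, ← ofReal_neg, norm_add_mul_I,
    Real.sq_sqrt (by positivity), neg_sq]

lemma Complex.norm_log_sub_I_mul_le {r θ : ℝ} (hr : 1 / 2 ≤ r) (hr₁ : r ≤ 1)
    (hθ : |θ| ≤ Real.pi) :
    ‖(Real.log r : ℂ) - I * θ‖ ≤ 3 * ‖(r : ℂ) - exp (I * θ)‖ := by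
  have hlog := Real.sq_log_le_four_mul_sq_one_sub hr hr₁
  have hcos := Real.cos_le_one_sub_mul_cos_sq hθ
  have hpi : Real.pi ^ 2 ≤ 16 := by nlinarith [Real.pi_le_four, Real.pi_pos]
  have hθsq : θ ^ 2 ≤ 9 * (1 - Real.cos θ) := by
    have : 2 / Real.pi ^ 2 * θ ^ 2 ≤ 1 - Real.cos θ := by linarith
    rw [div_mul_eq_mul_div, div_le_iff₀ (by positivity)] at this
    nlinarith [Real.cos_le_one θ]
  refine (pow_le_pow_iff_left₀ (norm_nonneg _) (by positivity) two_ne_zero).mp ?_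
  rw [mul_pow, norm_ofReal_sub_I_mul_sq, norm_ofReal_sub_exp_mul_I_sq]
  nlinarith

/-- There is an absolute constant `C > 0` such that for every integer `N ≥ 2`
and every real `θ` with `-π < θ ≤ π`, one has
`|(1 - 1/N) - e^{iθ}| ≥ C · |log(1 - 1/N) - iθ|`. -/
theorem circle_vs_line_distance :
    ∃ C : ℝ, 0 < C ∧
      ∀ (N : ℕ), 2 ≤ N →
        ∀ θ : ℝ, -Real.pi < θ → θ ≤ Real.pi →
          ‖(((1 - 1 / N : ℝ) : ℂ) - Complex.exp (Complex.I * θ))‖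
            ≥ C * ‖(((Real.log (1 - 1 / N) : ℝ) : ℂ) - Complex.I * θ)‖ := by
  refine ⟨1 / 3, by norm_num, fun N hN θ hθ₀ hθ₁ => ?_⟩
  have hN' : (2 : ℝ) ≤ N := by exact_mod_cast hN
  have hr : 1 / 2 ≤ 1 - 1 / (N : ℝ) := by
    have : 1 / (N : ℝ) ≤ 1 / 2 := one_div_le_one_div_of_le two_pos hN'
    linarith
  have hr₁ : 1 - 1 / (N : ℝ) ≤ 1 := by
    have : 0 ≤ 1 / (N : ℝ) := by positivity
    linarith
  have key := norm_log_sub_I_mul_le hr hr₁ (abs_le.mpr ⟨hθ₀.le, hθ₁⟩)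
  linarith
end
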